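/- Let a > 0 and x_a ≥ e¹² be real numbers, and suppose that θ(t) < t + a·t/(log t)⁵ for all real t ≥ 2. Define M_a = 120 + a + (a+720)/log x_a + (1792a + 1290240)/(log x_a)² + ((5040 + 7a)/(log 2)⁸)·(log x_a)⁶/√(x_a). Then for every real x > x_a, one has π(x) < x·∑_{k=0}^{4} k!/(log x)^{k+1} + M_a·x/(log x)⁶. -/

import Mathlib

/-!
Abel summation gives `π(x) = θ(x) / log x + ∫₂ˣ θ(t) / (t log² t) dt`. Inserting the bound on `θ`
leaves `∫₂ˣ dt / log² t + a ∫₂ˣ dt / log⁷ t`; integrating by parts repeatedly turns these into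
`x ∑ k! / log^(k+1) x` plus lower-order terms and `(5040 + 7a) ∫₂ˣ dt / log⁸ t`, and splitting that
last integral at `√x` bounds it by `√x / log⁸ 2 + 256 x / log⁸ x`. The lower-order terms are absorbed
into `x / log⁶ x` because `log x > log x_a` and `log⁶ t / √t` decreases for `t ≥ e¹²`.
-/

open Real Finset

/-- The prime counting function at a real argument: the number of primes `p ≤ x`. -/
noncomputable def primePi (x : ℝ) : ℝ := Nat.primeCounting ⌊x⌋₊

/-- Chebyshev's theta function: `θ(x) = ∑_{p ≤ x} log p`, the sum over primes `p ≤ x`. -/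
noncomputable def chebyshevθ (x : ℝ) : ℝ :=
  ∑ p ∈ (Finset.range (⌊x⌋₊ + 1)).filter Nat.Prime, Real.log p

open MeasureTheory
open scoped Nat

theorem chebyshevθ_eq_theta (x : ℝ) : chebyshevθ x = Chebyshev.theta x := by
  rw [chebyshevθ, Chebyshev.theta_eq_sum_Icc, Nat.range_succ_eq_Icc_zero]

theorem primePi_eq_chebyshevθ_div_log_add_integral {x : ℝ} (hx : 2 ≤ x) :
    primePi x = chebyshevθ x / log x + ∫ t in 2..x, chebyshevθ t / (t * log t ^ 2) := by
  simp only [primePi, chebyshevθ_eq_theta]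
  exact Chebyshev.primeCounting_eq_theta_div_log_add_integral hx

theorem intervalIntegrable_one_div_log_pow (n : ℕ) {a b : ℝ} (ha : 1 < a) (hb : 1 < b) :
    IntervalIntegrable (fun t ↦ 1 / log t ^ n) volume a b := by
  refine ContinuousOn.intervalIntegrable fun t ht ↦ ContinuousAt.continuousWithinAt ?_
  rw [Set.mem_uIcc] at ht
  have : t ≠ 0 := by grind
  have : log t ^ n ≠ 0 := pow_ne_zero _ (log_ne_zero.mpr (by grind))
  fun_prop

theorem integral_one_div_log_pow_eq (n : ℕ) {b c : ℝ} (hb : 1 < b) (hc : 1 < c) :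
    ∫ t in b..c, 1 / log t ^ (n + 1) =
      c / log c ^ (n + 1) - b / log b ^ (n + 1) + (n + 1) * ∫ t in b..c, 1 / log t ^ (n + 2) := by
  have hderiv : ∀ t ∈ Set.uIcc b c, HasDerivAt (fun t ↦ t / log t ^ (n + 1))
      (1 / log t ^ (n + 1) - (n + 1) * (1 / log t ^ (n + 2))) t := by
    intro t ht
    rw [Set.mem_uIcc] at ht
    have ht0 : t ≠ 0 := by grind
    have hlog : log t ≠ 0 := log_ne_zero.mpr (by grind)
    refine ((hasDerivAt_id t).div ((hasDerivAt_log ht0).pow (n + 1))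
      (pow_ne_zero _ hlog)).congr_deriv ?_
    simp only [id, Pi.pow_apply, Nat.cast_add, Nat.cast_one, add_tsub_cancel_right]
    field_simp
    ring
  rw [← intervalIntegral.integral_const_mul, ← intervalIntegral.integral_eq_sub_of_hasDerivAt
    hderiv (((intervalIntegrable_one_div_log_pow _ hb hc).sub
      ((intervalIntegrable_one_div_log_pow _ hb hc).const_mul _))),
    intervalIntegral.integral_sub (intervalIntegrable_one_div_log_pow _ hb hc)
      ((intervalIntegrable_one_div_log_pow _ hb hc).const_mul _)]
  ring

theorem integral_one_div_log_pow_le (n : ℕ) {x : ℝ} (hx : 2 ≤ x) :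
    ∫ t in 2..x, 1 / log t ^ (n + 1) ≤
      x / log x ^ (n + 1) + (n + 1) * ∫ t in 2..x, 1 / log t ^ (n + 2) := by
  rw [integral_one_div_log_pow_eq n one_lt_two (by linarith)]
  have : 0 ≤ 2 / log 2 ^ (n + 1) := by positivity
  linarith

theorem integral_one_div_log_pow_le_sum (n m : ℕ) {x : ℝ} (hx : 2 ≤ x) :
    ∫ t in 2..x, 1 / log t ^ (n + 1) ≤
      ∑ k ∈ range m, ((n + k)! : ℝ) / n ! * (x / log x ^ (n + k + 1)) +
        ((n + m)! : ℝ) / n ! * ∫ t in 2..x, 1 / log t ^ (n + m + 1) := by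
  induction m with
  | zero => simp [div_self (Nat.cast_ne_zero.mpr (Nat.factorial_ne_zero n) : (n ! : ℝ) ≠ 0)]
  | succ m ih =>
    have hstep := mul_le_mul_of_nonneg_left (integral_one_div_log_pow_le (n + m) hx)
      (by positivity : (0 : ℝ) ≤ (n + m)! / n !)
    have hfac : ((n + (m + 1))! : ℝ) = (n + m + 1) * (n + m)! := by
      rw [← add_assoc, Nat.factorial_succ]; push_cast; ring
    rw [sum_range_succ, hfac, add_assoc, show n + (m + 1) + 1 = n + m + 2 by ring]
    refine ih.trans (add_le_add_right (hstep.trans_eq ?_) _)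
    push_cast
    ring

theorem integral_one_div_log_pow_le_of_le (n : ℕ) {a b : ℝ} (ha : 1 < a) (hab : a ≤ b) :
    ∫ t in a..b, 1 / log t ^ n ≤ (b - a) / log a ^ n := by
  calc _ ≤ ∫ t in a..b, 1 / log a ^ n :=
        intervalIntegral.integral_mono_on hab
          (intervalIntegrable_one_div_log_pow n ha (by linarith)) (by simp)
          fun t ⟨hat, _⟩ ↦ by gcongr <;> bound
    _ = _ := by simp [div_eq_mul_inv]

theorem integral_one_div_log_pow_le_sqrt_add (n : ℕ) {x : ℝ} (hx : 4 ≤ x) :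
    ∫ t in 2..x, 1 / log t ^ n ≤ √x / log 2 ^ n + 2 ^ n * (x / log x ^ n) := by
  have hsqrt : 2 ≤ √x := by
    rw [show (2 : ℝ) = √4 by rw [show (4 : ℝ) = 2 ^ 2 by norm_num, sqrt_sq zero_le_two]]
    exact sqrt_le_sqrt hx
  have hsqrt_le : √x ≤ x := by nlinarith [sq_sqrt (show 0 ≤ x by linarith)]
  have hlog_sqrt : log √x = log x / 2 := log_sqrt (by linarith)
  have hlog : 0 < log √x := log_pos (by linarith)
  rw [← intervalIntegral.integral_add_adjacent_intervals (b := √x)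
    (intervalIntegrable_one_div_log_pow n one_lt_two (by linarith))
    (intervalIntegrable_one_div_log_pow n (by linarith) (by linarith))]
  gcongr
  · calc _ ≤ (√x - 2) / log 2 ^ n := integral_one_div_log_pow_le_of_le n one_lt_two hsqrt
      _ ≤ _ := by gcongr; linarith
  · calc _ ≤ (x - √x) / log √x ^ n :=
          integral_one_div_log_pow_le_of_le n (by linarith) hsqrt_le
      _ ≤ x / log √x ^ n := by gcongr; linarith
      _ = _ := by rw [hlog_sqrt, div_pow]; field_simp

theorem pow_mul_exp_half_le_of_le {n : ℕ} {A B : ℝ} (hA : 0 < A) (hnA : 2 * n ≤ A)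
    (hAB : A ≤ B) : B ^ n * exp (A / 2) ≤ A ^ n * exp (B / 2) := by
  have hratio : B / A ≤ exp ((B - A) / A) := by
    have := add_one_le_exp ((B - A) / A)
    rwa [show (B - A) / A + 1 = B / A by field_simp; ring] at this
  have hpow : (B / A) ^ n ≤ exp ((B - A) / 2) := calc
    (B / A) ^ n ≤ exp ((B - A) / A) ^ n := pow_le_pow_left₀ (div_nonneg (by linarith) hA.le) hratio n
    _ = exp (n * ((B - A) / A)) := (exp_nat_mul _ n).symm
    _ ≤ exp ((B - A) / 2) := by
      gcongr
      rw [← mul_div_assoc, div_le_div_iff₀ hA two_pos]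
      nlinarith
  calc B ^ n * exp (A / 2) = A ^ n * ((B / A) ^ n * exp (A / 2)) := by
        rw [div_pow, ← mul_assoc, mul_div_cancel₀ _ (pow_ne_zero _ hA.ne')]
    _ ≤ A ^ n * (exp ((B - A) / 2) * exp (A / 2)) := by gcongr
    _ = A ^ n * exp (B / 2) := by rw [← exp_add]; ring_nf

theorem sqrt_le_log_pow_div_sqrt_mul_div_log_pow {n : ℕ} {x y : ℝ} (hy : 1 < y)
    (hny : 2 * n ≤ log y) (hyx : y ≤ x) : √x ≤ log y ^ n / √y * x / log x ^ n := by
  have hlogy : 0 < log y := log_pos hy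
  have hlogx : 0 < log x := hlogy.trans_le (log_le_log (by linarith) hyx)
  have hsqrt_exp {z : ℝ} (hz : 0 < z) : √z = exp (log z / 2) := by rw [exp_half, exp_log hz]
  have key := pow_mul_exp_half_le_of_le hlogy hny (log_le_log (by linarith) hyx)
  rw [← hsqrt_exp (by linarith), ← hsqrt_exp (by linarith)] at key
  rw [div_mul_eq_mul_div, div_div, le_div_iff₀ (by positivity)]
  calc √x * (√y * log x ^ n) = log x ^ n * √y * √x := by ring
    _ ≤ log y ^ n * √x * √x := by gcongr
    _ = log y ^ n * x := by rw [mul_assoc, mul_self_sqrt (by linarith)]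

theorem integral_chebyshevθ_div_le {a x : ℝ} (k : ℕ) (hx : 2 ≤ x)
    (hθ : ∀ t ∈ Set.Icc 2 x, chebyshevθ t ≤ t + a * t / log t ^ k) :
    ∫ t in 2..x, chebyshevθ t / (t * log t ^ 2) ≤
      (∫ t in 2..x, 1 / log t ^ 2) + a * ∫ t in 2..x, 1 / log t ^ (k + 2) := by
  have hint (n : ℕ) := intervalIntegrable_one_div_log_pow n one_lt_two (by linarith : 1 < x)
  rw [← intervalIntegral.integral_const_mul, ← intervalIntegral.integral_add (hint 2)
    ((hint (k + 2)).const_mul a)]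
  refine intervalIntegral.integral_mono_on hx ?_ ((hint 2).add ((hint (k + 2)).const_mul a))
    fun t ht ↦ ?_
  · refine IntegrableOn.intervalIntegrable ?_
    simpa only [chebyshevθ_eq_theta, Set.uIcc_of_le hx]
      using Chebyshev.integrableOn_theta_div_id_mul_log_sq x
  · have ht0 : 0 < t := by linarith [ht.1]
    have hlog : 0 < log t := log_pos (by linarith [ht.1])
    calc chebyshevθ t / (t * log t ^ 2) ≤ (t + a * t / log t ^ k) / (t * log t ^ 2) := by
          gcongr; exact hθ t ht
      _ = 1 / log t ^ 2 + a * (1 / log t ^ (k + 2)) := by field_simp; ring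

theorem primePi_lt_of_chebyshevθ_lt {a x : ℝ} (ha : 0 ≤ a) (hx : 4 ≤ x)
    (hθ : ∀ t ∈ Set.Icc 2 x, chebyshevθ t < t + a * t / log t ^ 5) :
    primePi x < x * ∑ k ∈ range 5, (k ! : ℝ) / log x ^ (k + 1) + (120 + a) * (x / log x ^ 6) +
      (720 + a) * (x / log x ^ 7) + 2 ^ 8 * (5040 + 7 * a) * (x / log x ^ 8) +
      (5040 + 7 * a) * (√x / log 2 ^ 8) := by
  have hL : 0 < log x := log_pos (by linarith)
  have hθx : chebyshevθ x / log x < x / log x + a * (x / log x ^ 6) := by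
    calc chebyshevθ x / log x < (x + a * x / log x ^ 5) / log x := by
          gcongr; exact hθ x ⟨by linarith, le_rfl⟩
      _ = _ := by field_simp
  have hI := integral_chebyshevθ_div_le 5 (by linarith) fun t ht ↦ (hθ t ht).le
  have hI2 := integral_one_div_log_pow_le_sum 1 6 (by linarith : (2 : ℝ) ≤ x)
  have hI7 := mul_le_mul_of_nonneg_left (integral_one_div_log_pow_le_sum 6 1
    (by linarith : (2 : ℝ) ≤ x)) ha
  have hI8 := mul_le_mul_of_nonneg_left (integral_one_div_log_pow_le_sqrt_add 8 hx)
    (by positivity : (0 : ℝ) ≤ 5040 + 7 * a)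
  rw [primePi_eq_chebyshevθ_div_log_add_integral (by linarith)]
  norm_num [sum_range_succ, Nat.factorial] at hI hI2 hI7 hI8 ⊢
  linear_combination hθx + hI + hI2 + hI7 + hI8

theorem mul_div_pow_add_le {c y A B : ℝ} (m k : ℕ) (hc : 0 ≤ c) (hy : 0 ≤ y) (hA : 0 < A)
    (hAB : A ≤ B) : c * (y / B ^ (m + k)) ≤ c / A ^ k * y / B ^ m := by
  have hB : 0 < B := hA.trans_le hAB
  calc c * (y / B ^ (m + k)) = c / B ^ k * y / B ^ m := by rw [pow_add]; field_simp
    _ ≤ c / A ^ k * y / B ^ m := by gcongr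

theorem pi_upper_bound_from_theta (a xa : ℝ) (ha : a > 0) (hxa : xa ≥ Real.exp 1 ^ 12)
    (hθ : ∀ t : ℝ, t ≥ 2 → chebyshevθ t < t + a * t / Real.log t ^ 5) :
    ∀ x : ℝ, x > xa →
      primePi x < x * (∑ k ∈ Finset.range 5, (k.factorial : ℝ) / Real.log x ^ (k + 1)) +
        (120 + a + (a + 720) / Real.log xa + (1792 * a + 1290240) / Real.log xa ^ 2 +
            ((5040 + 7 * a) / Real.log 2 ^ 8) * Real.log xa ^ 6 / Real.sqrt xa) *
          x / Real.log x ^ 6 := by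
  intro x hx
  have hxa12 : exp 12 ≤ xa := by rwa [← exp_nat_mul, mul_one] at hxa
  have hxa13 : 13 ≤ xa := by linarith [add_one_le_exp (12 : ℝ)]
  have hLa : 12 ≤ log xa := (le_log_iff_exp_le (by linarith)).mpr hxa12
  have hLaL : log xa ≤ log x := log_le_log (by linarith) hx.le
  have hmain := primePi_lt_of_chebyshevθ_lt (x := x) ha.le (by linarith) fun t ht ↦ hθ t ht.1
  have h7 := mul_div_pow_add_le 6 1 (by positivity : 0 ≤ a + 720) (by linarith : 0 ≤ x)
    (by linarith) hLaL
  have h8 := mul_div_pow_add_le 6 2 (by positivity : 0 ≤ 1792 * a + 1290240)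
    (by linarith : 0 ≤ x) (by linarith) hLaL
  have hsqrt := mul_le_mul_of_nonneg_left
    (sqrt_le_log_pow_div_sqrt_mul_div_log_pow (n := 6) (by linarith) (by norm_num; linarith) hx.le)
    (by positivity : 0 ≤ (5040 + 7 * a) / log 2 ^ 8)
  linear_combination hmain + h7 + h8 + hsqrt
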